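/- arXiv:1210.2773 — 2 statements merged into one kernel-verified Lean document; each statement's English description precedes it below -/
import Mathlib

section
/- Let p ≡ 2 (mod 3) be a prime, and let K be a Galois cubic extension of ℚ (i.e., Gal(K/ℚ) ≅ C₃). Then the p-rank of the class group of K, defined as dim_{𝔽_p}(Cl(K)/p·Cl(K)), is even. -/
/-
For a nonzero ideal `I` of `𝓞 K`, the product of its Galois conjugates is the principal ideal
generated by its absolute norm, so the norm element `∑ σ` of `ℤ[Gal(K/ℚ)]` kills `Cl(K)` and hence
`V = 𝔽_p ⊗ Cl(K)`. As `p ≠ 3`, a Galois-fixed vector `v` of `V` satisfies `3 v = 0`, so `0` is the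
only fixed point of the `3`-group `Gal(K/ℚ)` on `V`, and `p ^ dim V = |V| ≡ 1 (mod 3)`. Since
`p ≡ -1 (mod 3)`, `dim V` is even.
-/

open NumberField Ideal
open scoped nonZeroDivisors Pointwise TensorProduct

theorem Ideal.eq_of_le_of_absNorm_eq {S : Type*} [CommRing S] [IsDedekindDomain S]
    [Module.Free ℤ S] {I J : Ideal S} (hle : I ≤ J) (hJ : absNorm J ≠ 0)
    (h : absNorm I = absNorm J) : I = J := by
  obtain ⟨C, rfl⟩ := dvd_iff_le.mpr hle
  rw [map_mul, mul_eq_left₀ hJ, absNorm_eq_one_iff] at h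
  rw [h, mul_top]

section NumberField

variable {K : Type*} [Field K] [NumberField K]

theorem Ideal.absNorm_smul (σ : K ≃ₐ[ℚ] K) (I : Ideal (𝓞 K)) : absNorm (σ • I) = absNorm I := by
  rw [← absNorm_relNorm ℤ, relNorm_smul, absNorm_relNorm]

variable [IsGalois ℚ K]

theorem NumberField.RingOfIntegers.algebraMap_norm_eq_prod_smul (x : 𝓞 K) :
    algebraMap ℤ (𝓞 K) (Algebra.norm ℤ x) = ∏ σ : K ≃ₐ[ℚ] K, σ • x := by
  apply RingOfIntegers.coe_injective
  rw [← IsScalarTower.algebraMap_apply, IsScalarTower.algebraMap_apply ℤ ℚ K, eq_intCast,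
    Algebra.coe_norm_int, Algebra.norm_eq_prod_automorphisms, map_prod]
  rfl

theorem Ideal.prod_smul_eq_span_absNorm (I : Ideal (𝓞 K)) :
    ∏ σ : K ≃ₐ[ℚ] K, σ • I = span {(absNorm I : 𝓞 K)} := by
  rcases eq_or_ne I ⊥ with rfl | hI
  · simp
  have hcard : Fintype.card (K ≃ₐ[ℚ] K) = Module.finrank ℤ (𝓞 K) := by
    rw [RingOfIntegers.rank, ← Nat.card_eq_fintype_card, IsGalois.card_aut_eq_finrank]
  -- The generators `N x = ∏ σ x` of the relative norm lie in `∏ σ I`; compare absolute norms.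
  refine (eq_of_le_of_absNorm_eq ?_ ?_ ?_).symm
  · have : span {(absNorm I : 𝓞 K)} = (relNorm ℤ I).map (algebraMap ℤ (𝓞 K)) := by
      rw [relNorm_int, map_span, Set.image_singleton, map_natCast]
    rw [this, map_le_iff_le_comap, relNorm_apply, span_le, Algebra.intNorm_eq_norm]
    rintro _ ⟨x, hx, rfl⟩
    rw [SetLike.mem_coe, mem_comap, RingOfIntegers.algebraMap_norm_eq_prod_smul]
    exact prod_mem_prod fun σ _ ↦ smul_mem_pointwise_smul σ x I hx
  · simp [absNorm_smul, absNorm_eq_zero_iff, hI]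
  · rw [absNorm_span_natCast, map_prod]
    simp only [absNorm_smul, Finset.prod_const, Finset.card_univ, hcard]

end NumberField

theorem FractionalIdeal.ringEquivOfRingEquiv_coeIdeal {R S : Type*} [CommRing R] [IsDomain R]
    [CommRing S] [IsDomain S] (K L : Type*) [Field K] [Algebra R K] [IsFractionRing R K] [Field L]
    [Algebra S L] [IsFractionRing S L] (f : R ≃+* S) (I : Ideal R) :
    ringEquivOfRingEquiv K L f (I : FractionalIdeal R⁰ K) = (I.map f : FractionalIdeal S⁰ L) := by
  ext x
  rw [← mem_coe, ringEquivOfRingEquiv_apply, coe_mk, mem_coeIdeal]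
  simp only [Submodule.mem_map, Ideal.mem_map_of_equiv]
  constructor
  · rintro ⟨_, ⟨a, ha, rfl⟩, rfl⟩
    exact ⟨f a, ⟨a, ha, rfl⟩, (IsFractionRing.semilinearEquivOfRingEquiv_algebraMap K L f a).symm⟩
  · rintro ⟨_, ⟨a, ha, rfl⟩, rfl⟩
    exact ⟨_, ⟨a, ha, rfl⟩, IsFractionRing.semilinearEquivOfRingEquiv_algebraMap K L f a⟩

theorem Ideal.pointwise_smul_mem_nonZeroDivisors {G R : Type*} [Group G] [CommRing R] [IsDomain R]
    [MulSemiringAction G R] (g : G) {I : Ideal R} (hI : I ∈ (Ideal R)⁰) : g • I ∈ (Ideal R)⁰ := by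
  rw [mem_nonZeroDivisors_iff_ne_zero] at hI ⊢
  rwa [Ne, smul_eq_zero_iff_eq]

namespace ClassGroup

variable {R : Type*} [CommRing R] [IsDedekindDomain R]

theorem mulEquiv_mk0 {S : Type*} [CommRing S] [IsDedekindDomain S] (f : R ≃+* S)
    (I : (Ideal R)⁰) :
    mulEquiv f (mk0 I) = mk0 ⟨I.1.map f, mem_nonZeroDivisors_of_ne_zero <| by
      simpa [Ideal.map_eq_bot_iff_of_injective f.injective] using nonZeroDivisors.coe_ne_zero I⟩ := by
  rw [mulEquiv, MulEquiv.trans_apply, MulEquiv.trans_apply, MulEquiv.symm_apply_eq,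
    ← mk_mk0 (FractionRing R), ← mk_mk0 (FractionRing S), equiv_mk, equiv_mk]
  refine congrArg (QuotientGroup.mk' _) (Units.ext ?_)
  simp [FractionalIdeal.canonicalEquiv_self, FractionalIdeal.ringEquivOfRingEquiv_coeIdeal]

variable (G : Type*) [Group G] [MulSemiringAction G R]

noncomputable instance : MulDistribMulAction G (ClassGroup R) where
  smul g := mulEquiv (MulSemiringAction.toRingEquiv G R g)
  one_smul c := by
    obtain ⟨I, rfl⟩ := mk0_surjective c
    show mulEquiv _ (mk0 I) = mk0 I
    rw [mulEquiv_mk0]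
    exact congrArg mk0 (Subtype.ext (one_smul G I.1))
  mul_smul g h c := by
    obtain ⟨I, rfl⟩ := mk0_surjective c
    show mulEquiv _ (mk0 I) = mulEquiv _ (mulEquiv _ (mk0 I))
    rw [mulEquiv_mk0, mulEquiv_mk0, mulEquiv_mk0]
    exact congrArg mk0 (Subtype.ext (mul_smul g h I.1))
  smul_mul g := map_mul (mulEquiv _)
  smul_one g := map_one (mulEquiv _)

variable {G}

theorem smul_mk0 (g : G) (I : (Ideal R)⁰) :
    g • mk0 I = mk0 ⟨g • (I : Ideal R), pointwise_smul_mem_nonZeroDivisors g I.2⟩ :=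
  mulEquiv_mk0 _ I

theorem prod_smul_eq_one {K : Type*} [Field K] [NumberField K] [IsGalois ℚ K]
    (c : ClassGroup (𝓞 K)) : ∏ σ : K ≃ₐ[ℚ] K, σ • c = 1 := by
  obtain ⟨I, rfl⟩ := mk0_surjective c
  simp_rw [smul_mk0]
  rw [← map_prod, mk0_eq_one_iff, Submonoid.coe_finsetProd]
  simp_rw [prod_smul_eq_span_absNorm]
  exact ⟨_, rfl⟩

end ClassGroup

namespace Representation

variable {k G V : Type*} [CommRing k] [Group G] [AddCommGroup V] [Module k V]

def baseChange (A : Type*) [CommRing A] [Algebra k A] (ρ : Representation k G V) :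
    Representation A G (A ⊗[k] V) :=
  (Module.End.baseChangeHom k A V).toMonoidHom.comp ρ

theorem norm_baseChange [Fintype G] (A : Type*) [CommRing A] [Algebra k A]
    (ρ : Representation k G V) : (ρ.baseChange A).norm = ρ.norm.baseChange A :=
  (map_sum (Module.End.baseChangeHom k A V) _ _).symm

theorem eq_zero_of_norm_eq_zero_of_forall_apply_eq_self {k : Type*} [Field k] [Module k V]
    [Fintype G] (hG : (Fintype.card G : k) ≠ 0) (ρ : Representation k G V) (hρ : ρ.norm = 0)
    {v : V} (hv : ∀ g, ρ g v = v) : v = 0 := by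
  have : ρ.norm v = (Fintype.card G : k) • v := by
    rw [norm, LinearMap.sum_apply, Finset.sum_congr rfl fun g _ ↦ hv g, Finset.sum_const,
      Finset.card_univ, Nat.cast_smul_eq_nsmul]
  rw [hρ, LinearMap.zero_apply, eq_comm] at this
  exact (smul_eq_zero.mp this).resolve_left hG

end Representation

theorem Nat.even_of_pow_modEq_one_of_mod_three_eq_two {p r : ℕ} (hp : p % 3 = 2)
    (h : p ^ r ≡ 1 [MOD 3]) : Even r := by
  have hp' : (p : ZMod 3) = -1 := by
    rw [← ZMod.natCast_mod, hp]
    rfl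
  rw [← ZMod.natCast_eq_natCast_iff, Nat.cast_pow, hp', Nat.cast_one] at h
  exact (neg_one_pow_eq_one_iff_even (by decide)).mp h

theorem Representation.even_finrank_of_norm_eq_zero {p : ℕ} [Fact p.Prime] (hp : p % 3 = 2)
    {G V : Type*} [Group G] [Fintype G] (hG : Nat.card G = 3) [AddCommGroup V] [Module (ZMod p) V]
    [Finite V] (ρ : Representation (ZMod p) G V) (hρ : ρ.norm = 0) :
    Even (Module.finrank (ZMod p) V) := by
  have h3 : (Fintype.card G : ZMod p) ≠ 0 := by
    rw [← Nat.card_eq_fintype_card, hG, Ne, ZMod.natCast_eq_zero_iff]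
    intro h
    have := (Nat.prime_dvd_prime_iff_eq Fact.out Nat.prime_three).mp h
    omega
  let _ : MulAction G V := MulAction.compHom V ρ
  have hfix : MulAction.fixedPoints G V = {0} :=
    Set.eq_singleton_iff_unique_mem.mpr ⟨fun g ↦ map_zero (ρ g),
      fun v hv ↦ ρ.eq_zero_of_norm_eq_zero_of_forall_apply_eq_self h3 hρ hv⟩
  have := (IsPGroup.of_card (p := 3) (n := 1) (by rw [hG, pow_one])).card_modEq_card_fixedPoints V
  rw [hfix, Nat.card_unique (α := ({0} : Set V)), Module.natCard_eq_pow_finrank (K := ZMod p),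
    Nat.card_zmod] at this
  exact Nat.even_of_pow_modEq_one_of_mod_three_eq_two hp this

/-- If `p ≡ 2 (mod 3)` is prime and `K` is a Galois cubic field (Galois over `ℚ` with
Galois group of order 3, hence cyclic), then the `p`-rank of the class group of `K`,
`dim_{𝔽_p}(Cl(K)/p·Cl(K))`, is even.  Here `Cl(K)/p·Cl(K)` is realized as
`ZMod p ⊗[ℤ] Cl(K)`. -/
theorem stmt_0 (p : ℕ) [Fact p.Prime] (hp : p % 3 = 2)
    (K : Type) [Field K] [NumberField K] [IsGalois ℚ K]
    (hcard : Nat.card (K ≃ₐ[ℚ] K) = 3) :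
    Even (Module.finrank (ZMod p)
      (TensorProduct ℤ (ZMod p) (Additive (ClassGroup (𝓞 K))))) := by
  set ρ := Representation.ofMulDistribMulAction (K ≃ₐ[ℚ] K) (ClassGroup (𝓞 K))
  have hρ : ρ.norm = 0 := LinearMap.ext fun c ↦ Additive.toMul.injective <| by
    rw [Representation.norm_ofMulDistribMulAction_eq, ClassGroup.prod_smul_eq_one]
    rfl
  have : Finite (TensorProduct ℤ (ZMod p) (Additive (ClassGroup (𝓞 K)))) :=
    Module.finite_of_finite (ZMod p)
  exact (ρ.baseChange (ZMod p)).even_finrank_of_norm_eq_zero hp hcard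
    (by rw [Representation.norm_baseChange, hρ, LinearMap.baseChange_zero])
end

section
/- Let G be a finite group whose Sylow p-subgroup is cyclic. Then the Sylow p-subgroup of the Schur multiplier H₂(G, ℤ) is trivial. -/
/-!
Let `P` be a Sylow `p`-subgroup of `G`. Since `P` is cyclic, its even-degree cohomology with
trivial coefficients `M` is `M / |P| M`, which vanishes for the divisible group `ℚ/ℤ`; so every
2-cocycle of `G` restricts to a coboundary on `P`. Averaging over coset representatives
(corestriction) shows that `[G : P]` times the cocycle is then a coboundary on `G`. Hence
`H²(G, ℚ/ℤ)` is killed by `[G : P]`, which is prime to `p`, and has no `p`-torsion.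
-/

open groupCohomology CategoryTheory

theorem subsingleton_groupCohomology_of_isCyclic {k P : Type} [CommRing k] [Group P] [Finite P]
    [IsCyclic P] (M : Type) [AddCommGroup M] [Module k M]
    (hM : Function.Surjective fun m : M => Nat.card P • m) (i : ℕ) [NeZero i] (hi : Even i) :
    Subsingleton (groupCohomology (Rep.trivial k P M) i) := by
  let _ := IsCyclic.commGroup (α := P)
  have _ := Fintype.ofFinite P
  obtain ⟨g, hg⟩ := IsCyclic.exists_generator (α := P)
  have hsurj : Function.Surjective
      (Rep.FiniteCyclicGroup.groupCohomologyπEven (Rep.trivial k P M) g hg i hi) := by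
    rw [← ModuleCat.epi_iff_surjective]
    set S := Rep.FiniteCyclicGroup.normHomCompSub (Rep.trivial k P M) g
    have hcycles : Epi S.moduleCatCyclesIso.inv := IsIso.epi_of_iso _
    exact epi_comp' hcycles (epi_comp' inferInstance inferInstance)
  refine subsingleton_of_forall_eq 0 fun y => ?_
  obtain ⟨x, rfl⟩ := hsurj y
  rw [Rep.FiniteCyclicGroup.groupCohomologyπEven_eq_zero_iff]
  obtain ⟨m, hm⟩ := hM x.1
  exact ⟨m, by simpa [Rep.norm, Representation.norm, Nat.card_eq_fintype_card] using hm⟩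

section Transfer

variable {k G M : Type} [CommRing k] [Group G] [AddCommGroup M] [Module k M]

theorem mem_cocycles₂_trivial_iff (f : G × G → M) :
    f ∈ cocycles₂ (Rep.trivial k G M) ↔
      ∀ g h j : G, f (g * h, j) + f (g, h) = f (h, j) + f (g, h * j) := by
  simp [mem_cocycles₂_iff]

theorem mem_coboundaries₂_trivial_iff (f : G × G → M) :
    f ∈ coboundaries₂ (Rep.trivial k G M) ↔
      ∃ u : G → M, ∀ g h : G, u h - u (g * h) + u g = f (g, h) := by
  constructor
  · rintro ⟨u, rfl⟩
    exact ⟨u, fun g h => rfl⟩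
  · rintro ⟨u, hu⟩
    exact ⟨u, funext fun gh => hu gh.1 gh.2⟩

theorem sum_sub_sum_add_sum_eq_card_smul {X : Type} [MulAction G X] [Fintype X] {F : G × G → M}
    (e : G → X → M) (he : ∀ g h x, e h x - e (g * h) x + e g (h • x) = F (g, h)) (g h : G) :
    (∑ x, e h x) - (∑ x, e (g * h) x) + ∑ x, e g x = Fintype.card X • F (g, h) := by
  have hreindex : ∑ x, e g (h • x) = ∑ x, e g x :=
    Fintype.sum_bijective _ (MulAction.bijective h) _ _ fun _ => rfl
  rw [← hreindex, ← Finset.sum_sub_distrib, ← Finset.sum_add_distrib, ← Finset.card_univ,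
    ← Finset.sum_const]
  exact Finset.sum_congr rfl fun x _ => he g h x

theorem cocycle_sub_eq_of_mul_eq_mul {f : G × G → M}
    (hf : ∀ g h j : G, f (g * h, j) + f (g, h) = f (h, j) + f (g, h * j))
    {g h s₀ s₁ s₂ a b : G} (hga : g * s₁ = s₂ * a) (hhb : h * s₀ = s₁ * b) :
    f (a, b) - f (g, h) =
      (f (s₁, b) - f (h, s₀)) - (f (s₂, a * b) - f (g * h, s₀)) + (f (s₂, a) - f (g, s₁)) := by
  have e₁ := hf s₂ a b
  have e₂ := hf g s₁ b
  have e₃ := hf g h s₀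
  rw [← hga] at e₁
  rw [hhb] at e₃
  linear_combination (norm := abel) e₂ - e₁ - e₃

namespace Subgroup

variable (P : Subgroup G)

noncomputable def cosetCocycle (g : G) (q : G ⧸ P) : P :=
  ⟨(g • q).out⁻¹ * (g * q.out), by
    rw [← QuotientGroup.eq, QuotientGroup.out_eq', ← smul_eq_mul, MulAction.Quotient.mk_smul_out]⟩

theorem mul_out_eq (g : G) (q : G ⧸ P) : g * q.out = (g • q).out * P.cosetCocycle g q := by
  simp [cosetCocycle]

theorem cosetCocycle_mul (g h : G) (q : G ⧸ P) :
    P.cosetCocycle (g * h) q = P.cosetCocycle g (h • q) * P.cosetCocycle h q := by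
  ext
  simp only [cosetCocycle, mul_smul, coe_mul]
  group

theorem index_smul_mem_coboundaries₂ [P.FiniteIndex] {f : G × G → M}
    (hf : f ∈ cocycles₂ (Rep.trivial k G M))
    (hres : (fun ab : P × P => f (ab.1, ab.2)) ∈ coboundaries₂ (Rep.trivial k P M)) :
    P.index • f ∈ coboundaries₂ (Rep.trivial k G M) := by
  rw [mem_cocycles₂_trivial_iff] at hf
  obtain ⟨u, hu⟩ := (mem_coboundaries₂_trivial_iff _).1 hres
  -- `u` transported along the coset representatives, corrected by the defect of `f` between
  -- `g` acting on a representative and the representative of the translated coset.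
  let e (g : G) (q : G ⧸ P) : M :=
    u (P.cosetCocycle g q) - (f ((g • q).out, P.cosetCocycle g q) - f (g, q.out))
  have he (g h : G) (q : G ⧸ P) : e h q - e (g * h) q + e g (h • q) = f (g, h) := by
    have hcoset := cocycle_sub_eq_of_mul_eq_mul hf (P.mul_out_eq g (h • q)) (P.mul_out_eq h q)
    have hcob := hu (P.cosetCocycle g (h • q)) (P.cosetCocycle h q)
    rw [← coe_mul, ← P.cosetCocycle_mul] at hcoset
    rw [← P.cosetCocycle_mul] at hcob
    simp only [e, mul_smul] at hcoset ⊢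
    linear_combination (norm := abel) hcob + hcoset
  have : Fintype (G ⧸ P) := fintypeQuotientOfFiniteIndex
  refine (mem_coboundaries₂_trivial_iff _).2 ⟨fun g => ∑ q, e g q, fun g h => ?_⟩
  rw [Pi.smul_apply, index_eq_card, Nat.card_eq_fintype_card]
  exact sum_sub_sum_add_sum_eq_card_smul e he g h

end Subgroup

end Transfer

/-- If the Sylow `p`-subgroups of a finite group `G` are cyclic, then the Sylow
`p`-subgroup of the Schur multiplier `H₂(G, ℤ)` is trivial.  Since `G` is finite, the
Schur multiplier is canonically isomorphic to `H²(G, ℚ/ℤ)` with trivial coefficients,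
which is how we formalize it; triviality of its Sylow `p`-subgroup is expressed as the
absence of `p`-torsion. -/
theorem stmt_14 (G : Type) [Group G] [Finite G] (p : ℕ) [Fact p.Prime]
    (h : ∀ P : Sylow p G, IsCyclic P) :
    ∀ x : (groupCohomology (Rep.trivial ℤ G (AddCircle (1 : ℚ))) 2),
      p • x = 0 → x = 0 := by
  intro x hx
  obtain ⟨P⟩ : Nonempty (Sylow p G) := inferInstance
  have := h P
  have hdiv : Function.Surjective fun m : AddCircle (1 : ℚ) => Nat.card P • m := by
    simpa only [← natCast_zsmul] using
      DivisibleBy.surjective_smul (AddCircle (1 : ℚ)) ℤ (Nat.cast_ne_zero.2 Nat.card_pos.ne')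
  have hindex : (P : Subgroup G).index • x = 0 := by
    induction x using H2_induction_on with | h f => ?_
    rw [← map_nsmul, H2π_eq_zero_iff]
    refine (P : Subgroup G).index_smul_mem_coboundaries₂ f.2 ?_
    have hres : (fun ab : P × P => f (ab.1, ab.2)) ∈
        cocycles₂ (Rep.trivial ℤ P (AddCircle (1 : ℚ))) :=
      (mem_cocycles₂_trivial_iff _).2 fun a b c => (mem_cocycles₂_trivial_iff _).1 f.2 a b c
    have := subsingleton_groupCohomology_of_isCyclic (k := ℤ) _ hdiv 2 even_two
    exact (H2π_eq_zero_iff ⟨_, hres⟩).1 (Subsingleton.elim _ _)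
  have hcop : p.Coprime (P : Subgroup G).index :=
    (Nat.Prime.coprime_iff_not_dvd Fact.out).2 P.not_dvd_index
  rw [← AddMonoid.addOrderOf_eq_one_iff]
  exact Nat.eq_one_of_dvd_coprimes hcop (addOrderOf_dvd_of_nsmul_eq_zero hx)
    (addOrderOf_dvd_of_nsmul_eq_zero hindex)
end
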